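/- Let R be a commutative ring, ω(x) = x³ + a₂x² + a₁x + a₀ ∈ R[x] with root x₁ ∈ R, ω(x) = (x − x₁)(x² + a₁′x + a₀′), and let P(x) = x² + a₁′x + a₀′. Then in the tensor product (R[x]/(ω(x))) ⊗_R (R[y]/(ω(y))), the element [x²P(x)]⊗[1] + [xP(x)]⊗[y] + a₂[xP(x)]⊗[1] − x₁[P(x)]⊗[y] − x₁a₁′[P(x)]⊗[1] equals zero. -/
import Mathlib


open Polynomial TensorProduct

theorem stmt_2 {R : Type*} [CommRing R] (a₂ a₁ a₀ x₁ a₁' a₀' : R)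
    (ω P : R[X]) (hP : P = X ^ 2 + C a₁' * X + C a₀')
    (hω : ω = X ^ 3 + C a₂ * X ^ 2 + C a₁ * X + C a₀)
    (hfac : ω = (X - C x₁) * P) :
    (AdjoinRoot.mk ω (X ^ 2 * P) ⊗ₜ[R] AdjoinRoot.mk ω 1
      + AdjoinRoot.mk ω (X * P) ⊗ₜ[R] AdjoinRoot.mk ω X
      + a₂ • (AdjoinRoot.mk ω (X * P) ⊗ₜ[R] AdjoinRoot.mk ω 1)
      - x₁ • (AdjoinRoot.mk ω P ⊗ₜ[R] AdjoinRoot.mk ω X)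
      - (x₁ * a₁') • (AdjoinRoot.mk ω P ⊗ₜ[R] AdjoinRoot.mk ω 1)
      : TensorProduct R (AdjoinRoot ω) (AdjoinRoot ω)) = 0 := by
  have key : a₂ = a₁' - x₁ := by
    have h := hω.symm.trans hfac
    rw [hP] at h
    ring_nf at h
    have h2 := congrArg (fun p => Polynomial.coeff p 2) h
    simp [coeff_X_pow] at h2
    linear_combination h2
  have h1 : AdjoinRoot.mk ω (X * P) = x₁ • AdjoinRoot.mk ω P := by
    rw [← sub_eq_zero]
    have : x₁ • AdjoinRoot.mk ω P = AdjoinRoot.mk ω (C x₁ * P) := by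
      rw [map_mul]
      rw [Algebra.smul_def]
      rfl
    rw [this, ← map_sub, ← sub_mul, ← hfac, AdjoinRoot.mk_self]
  have h2 : AdjoinRoot.mk ω (X ^ 2 * P) = (x₁ * x₁) • AdjoinRoot.mk ω P := by
    have : (X ^ 2 * P : R[X]) = X * (X * P) := by ring
    rw [this, map_mul, h1, mul_smul_comm, ← map_mul, h1, smul_smul]
  rw [h1, h2, key]
  simp only [← TensorProduct.smul_tmul', smul_smul]
  module
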